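/- Let λ : [0,∞) → [0,∞) be continuous, Λ(t) = ∫_0^t λ(u) du, and let T have density λ(s) e^{−Λ(s)}. Let 0 ≤ v_0 < C and suppose P(T > v_0) > 0. Then for the censored data T̃ = min(T, C), δ = 1_{T ≤ C}, and any bounded measurable g, E[g(T̃, δ) | T > v_0] = E[g(T̃_0, δ_0) · λ(T̃_0)^{δ_0} exp(−(Λ(T̃_0) − Λ(v_0))) e^{T̃_0 − v_0} | T_0 > v_0], where T_0 is unit-rate exponential and T̃_0 = min(T_0, C), δ_0 = 1_{T_0 ≤ C}. -/

import Mathlib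

/-!
Both sides are integrals over `(v₀, ∞)` against the laws of `T` and `T₀`. A law with continuous
hazard `λ` has density `λ e^{-Λ}` and, by the fundamental theorem of calculus for `-e^{-Λ}`,
survival function `e^{-Λ}`; since the censored integrand `h` is constant beyond `C`,
`E[h(T) | T > v₀] = e^{Λ(v₀)} (∫_{(v₀, C]} λ e^{-Λ} h + h(C⁺) e^{-Λ(C)})`.
The unit exponential law is the law with hazard `1`. On `(v₀, C]` the likelihood ratio turns its
density `e^{-t}` into `e^{Λ(v₀) - v₀} λ(t) e^{-Λ(t)}`, and beyond `C` it turns its tail mass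
`e^{-C}` into `e^{Λ(v₀) - v₀} e^{-Λ(C)}`, so the two normalisations `e^{v₀}` and `e^{Λ(v₀)}` match.
-/

open MeasureTheory ProbabilityTheory Set Real

theorem map_cond_preimage {Ω α : Type*} [MeasurableSpace Ω] [MeasurableSpace α] (μ : Measure Ω)
    {X : Ω → α} (hX : Measurable X) {s : Set α} (hs : MeasurableSet s) :
    μ[|X ⁻¹' s].map X = (μ.map X)[|s] := by
  rw [ProbabilityTheory.cond, ProbabilityTheory.cond, Measure.map_smul,
    ← Measure.restrict_map hX hs, Measure.map_apply hX hs]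

theorem integral_cond_preimage {Ω α E : Type*} [MeasurableSpace Ω] [MeasurableSpace α]
    [NormedAddCommGroup E] [NormedSpace ℝ E]
    (μ : Measure Ω) {X : Ω → α} (hX : Measurable X) {s : Set α} (hs : MeasurableSet s)
    {F : α → E} (hF : AEStronglyMeasurable F ((μ.map X)[|s])) :
    ∫ ω, F (X ω) ∂μ[|X ⁻¹' s] = ∫ x, F x ∂(μ.map X)[|s] := by
  rw [← map_cond_preimage μ hX hs, integral_map hX.aemeasurable (map_cond_preimage μ hX hs ▸ hF)]

theorem measurable_censored {g : ℝ → Bool → ℝ} (hg : ∀ b, Measurable fun x => g x b) (C : ℝ) :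
    Measurable fun t => g (min t C) (decide (t ≤ C)) := by
  have h_ite : (fun t => g (min t C) (decide (t ≤ C))) =
      fun t => if t ≤ C then g (min t C) true else g (min t C) false := by
    funext t; split_ifs <;> simp [*]
  rw [h_ite]
  exact Measurable.ite measurableSet_Iic (by fun_prop) (by fun_prop)

noncomputable def hazardLaw (lam Lam : ℝ → ℝ) : Measure ℝ :=
  (volume.restrict (Ioi 0)).withDensity fun t => ENNReal.ofReal (lam t * exp (-Lam t))

theorem hazardLaw_restrict_of_subset (lam Lam : ℝ → ℝ) {s : Set ℝ} (hs : MeasurableSet s)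
    (hs0 : s ⊆ Ioi 0) :
    (hazardLaw lam Lam).restrict s =
      (volume.restrict s).withDensity fun t => ENNReal.ofReal (lam t * exp (-Lam t)) := by
  rw [hazardLaw, restrict_withDensity hs, Measure.restrict_restrict hs, inter_eq_left.2 hs0]

theorem expMeasure_one_eq_hazardLaw : expMeasure 1 = hazardLaw (fun _ => 1) id := by
  rw [expMeasure, gammaMeasure, hazardLaw, ← withDensity_indicator measurableSet_Ioi]
  refine withDensity_congr_ae ?_
  filter_upwards [Measure.ae_ne volume 0] with t ht
  rcases ht.lt_or_gt with ht | ht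
  · simp [gammaPDF_of_neg ht, ht.not_gt]
  · simp [ht, gammaPDF, gammaPDFReal, ht.le]

section Hazard

variable {lam Lam : ℝ → ℝ} (hlam : Continuous lam) (hLam : ∀ t, Lam t = ∫ u in (0:ℝ)..t, lam u)
include hlam hLam

theorem hasDerivAt_of_eq_intervalIntegral (t : ℝ) : HasDerivAt Lam (lam t) t := by
  rw [funext hLam]
  exact (hlam.integral_hasStrictDerivAt 0 t).hasDerivAt

theorem continuous_of_eq_intervalIntegral : Continuous Lam :=
  continuous_iff_continuousAt.2 fun t =>
    (hasDerivAt_of_eq_intervalIntegral hlam hLam t).continuousAt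

theorem continuous_hazardDensity : Continuous fun t => lam t * exp (-Lam t) :=
  hlam.mul (continuous_exp.comp (continuous_of_eq_intervalIntegral hlam hLam).neg)

theorem integral_Ioc_hazardDensity {a b : ℝ} (hab : a ≤ b) :
    ∫ t in Ioc a b, lam t * exp (-Lam t) = exp (-Lam a) - exp (-Lam b) := by
  have hderiv (t : ℝ) : HasDerivAt (fun u => -exp (-Lam u)) (lam t * exp (-Lam t)) t := by
    have h : HasDerivAt (fun u => -exp (-Lam u)) (-(exp (-Lam t) * -lam t)) t :=
      ((hasDerivAt_of_eq_intervalIntegral hlam hLam t).neg.exp).neg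
    exact h.congr_deriv (by ring)
  rw [← intervalIntegral.integral_of_le hab, intervalIntegral.integral_eq_sub_of_hasDerivAt
    (fun t _ => hderiv t) ((continuous_hazardDensity hlam hLam).intervalIntegrable a b)]
  ring

theorem integrableOn_Ioc_hazardDensity_mul {f : ℝ → ℝ} (hf : Measurable f) {M : ℝ}
    (hM : ∀ t, |f t| ≤ M) (a b : ℝ) :
    IntegrableOn (fun t => lam t * exp (-Lam t) * f t) (Ioc a b) :=
  (continuous_hazardDensity hlam hLam).integrableOn_Ioc.mul_bdd hf.aestronglyMeasurable
    (.of_forall hM)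

theorem hazardLaw_Ioc (hlam_nonneg : ∀ t, 0 ≤ lam t) {a b : ℝ} (ha : 0 ≤ a) (hab : a ≤ b) :
    hazardLaw lam Lam (Ioc a b) = ENNReal.ofReal (exp (-Lam a) - exp (-Lam b)) := by
  rw [← Measure.restrict_apply_univ, hazardLaw_restrict_of_subset lam Lam measurableSet_Ioc
      fun t ht => ha.trans_lt ht.1, withDensity_apply _ MeasurableSet.univ,
    Measure.restrict_univ, ← ofReal_integral_eq_lintegral_ofReal
      (continuous_hazardDensity hlam hLam).integrableOn_Ioc
      (.of_forall fun t => mul_nonneg (hlam_nonneg t) (exp_pos _).le),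
    integral_Ioc_hazardDensity hlam hLam hab]

-- Total mass `1` is what excludes a defect `e^{-Λ(∞)}` at infinity.
theorem hazardLaw_Ioi [IsProbabilityMeasure (hazardLaw lam Lam)] (hlam_nonneg : ∀ t, 0 ≤ lam t)
    {a : ℝ} (ha : 0 ≤ a) : hazardLaw lam Lam (Ioi a) = ENNReal.ofReal (exp (-Lam a)) := by
  have hLam0 : Lam 0 = 0 := by simp [hLam]
  have hexp_le_one : exp (-Lam a) ≤ 1 := by
    rw [exp_le_one_iff, neg_nonpos, hLam]
    exact intervalIntegral.integral_nonneg ha fun u _ => hlam_nonneg u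
  have hfull : hazardLaw lam Lam (Ioi 0) = 1 := by
    rw [← prob_compl_eq_zero_iff measurableSet_Ioi, hazardLaw,
      withDensity_apply _ measurableSet_Ioi.compl, Measure.restrict_restrict
        measurableSet_Ioi.compl, compl_inter_self, Measure.restrict_empty, lintegral_zero_measure]
  have h := measure_sdiff (μ := hazardLaw lam Lam) Ioc_subset_Ioi_self
    measurableSet_Ioc.nullMeasurableSet (measure_ne_top _ (Ioc 0 a))
  rwa [Ioi_sdiff_Ioc, max_eq_right ha, hfull, hazardLaw_Ioc hlam hLam hlam_nonneg le_rfl ha,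
    hLam0, neg_zero, exp_zero, ← ENNReal.ofReal_one, ← ENNReal.ofReal_sub _ (by linarith),
    sub_sub_cancel] at h

theorem integral_cond_hazardLaw_Ioi [IsProbabilityMeasure (hazardLaw lam Lam)]
    (hlam_nonneg : ∀ t, 0 ≤ lam t) {v C K : ℝ} {f : ℝ → ℝ} (hv : 0 ≤ v) (hvC : v ≤ C)
    (hf : IntegrableOn (fun t => lam t * exp (-Lam t) * f t) (Ioc v C))
    (hfC : EqOn f (fun _ => K) (Ioi C)) :
    ∫ t, f t ∂(hazardLaw lam Lam)[|Ioi v] =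
      exp (Lam v) * ((∫ t in Ioc v C, lam t * exp (-Lam t) * f t) + K * exp (-Lam C)) := by
  have hρ_meas : Measurable fun t => ENNReal.ofReal (lam t * exp (-Lam t)) :=
    (continuous_hazardDensity hlam hLam).measurable.ennreal_ofReal
  have hρ_finite : ∀ᵐ t ∂volume.restrict (Ioc v C), ENNReal.ofReal (lam t * exp (-Lam t)) < ⊤ :=
    .of_forall fun _ => ENNReal.ofReal_lt_top
  have hρ_toReal (t : ℝ) : (ENNReal.ofReal (lam t * exp (-Lam t))).toReal = lam t * exp (-Lam t) :=
    ENNReal.toReal_ofReal (mul_nonneg (hlam_nonneg t) (exp_pos _).le)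
  have hrestrict := hazardLaw_restrict_of_subset lam Lam measurableSet_Ioc
    fun t (ht : t ∈ Ioc v C) => hv.trans_lt ht.1
  have hf_int : IntegrableOn f (Ioc v C) (hazardLaw lam Lam) := by
    rw [IntegrableOn, hrestrict, integrable_withDensity_iff_integrable_smul' hρ_meas hρ_finite]
    simp only [hρ_toReal, smul_eq_mul]
    exact hf
  have hIoc : ∫ t in Ioc v C, f t ∂hazardLaw lam Lam =
      ∫ t in Ioc v C, lam t * exp (-Lam t) * f t := by
    rw [hrestrict, integral_withDensity_eq_integral_toReal_smul hρ_meas hρ_finite]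
    simp only [hρ_toReal, smul_eq_mul]
  have hIoi : ∫ t in Ioi C, f t ∂hazardLaw lam Lam = K * exp (-Lam C) := by
    rw [setIntegral_congr_fun measurableSet_Ioi hfC, setIntegral_const, measureReal_def,
      hazardLaw_Ioi hlam hLam hlam_nonneg (hv.trans hvC), ENNReal.toReal_ofReal (exp_pos _).le,
      smul_eq_mul, mul_comm]
  rw [ProbabilityTheory.cond, integral_smul_measure, hazardLaw_Ioi hlam hLam hlam_nonneg hv,
    ← Ioc_union_Ioi_eq_Ioi hvC, setIntegral_union Ioc_disjoint_Ioi_same measurableSet_Ioi hf_int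
      ((integrableOn_const (C := K)).congr_fun hfC.symm measurableSet_Ioi), hIoc, hIoi,
    ENNReal.toReal_inv, ENNReal.toReal_ofReal (exp_pos _).le, smul_eq_mul, ← exp_neg, neg_neg]

end Hazard

theorem censored_likelihood_ratio_truncated_general
    {Ω : Type*} [MeasurableSpace Ω] {μ : Measure Ω} [IsProbabilityMeasure μ]
    {Ω₀ : Type*} [MeasurableSpace Ω₀] {μ₀ : Measure Ω₀} [IsProbabilityMeasure μ₀]
    (lam : ℝ → ℝ) (hlam_nonneg : ∀ u, 0 ≤ lam u) (hlam_cont : Continuous lam)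
    (Lam : ℝ → ℝ) (hLam : ∀ t, Lam t = ∫ u in (0:ℝ)..t, lam u)
    (T : Ω → ℝ) (hT : Measurable T)
    (hlawT : Measure.map T μ =
      (volume.restrict (Set.Ioi (0:ℝ))).withDensity
        (fun s => ENNReal.ofReal (lam s * Real.exp (-(Lam s)))))
    (T₀ : Ω₀ → ℝ) (hT₀ : Measurable T₀)
    (hlawT₀ : Measure.map T₀ μ₀ = expMeasure 1)
    (v₀ C : ℝ) (hv₀ : 0 ≤ v₀) (hv₀C : v₀ < C)
    (g : ℝ → Bool → ℝ) (hg : ∀ b, Measurable (fun x => g x b))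
    (hbdd : ∃ M, ∀ x b, |g x b| ≤ M) :
    ∫ ω, g (min (T ω) C) (decide (T ω ≤ C))
        ∂(ProbabilityTheory.cond μ {ω | v₀ < T ω}) =
      ∫ ω, g (min (T₀ ω) C) (decide (T₀ ω ≤ C)) *
        (if T₀ ω ≤ C then lam (min (T₀ ω) C) else 1) *
        Real.exp (-(Lam (min (T₀ ω) C) - Lam v₀)) *
        Real.exp (min (T₀ ω) C - v₀)
        ∂(ProbabilityTheory.cond μ₀ {ω | v₀ < T₀ ω}) := by
  obtain ⟨M, hM⟩ := hbdd
  set f : ℝ → ℝ := fun t => g (min t C) (decide (t ≤ C)) with hf_def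
  set φ : ℝ → ℝ := fun t => f t * (if t ≤ C then lam (min t C) else 1) *
    exp (-(Lam (min t C) - Lam v₀)) * exp (min t C - v₀) with hφ_def
  have hf_meas : Measurable f := measurable_censored hg C
  have hLam_cont := continuous_of_eq_intervalIntegral hlam_cont hLam
  have hφ_meas : Measurable φ :=
    ((hf_meas.mul (Measurable.ite measurableSet_Iic (by fun_prop) measurable_const)).mul
      (by fun_prop)).mul (by fun_prop)
  have hν : μ.map T = hazardLaw lam Lam := hlawT
  have hν₀ : μ₀.map T₀ = hazardLaw (fun _ => 1) id := hlawT₀.trans expMeasure_one_eq_hazardLaw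
  have : IsProbabilityMeasure (hazardLaw lam Lam) :=
    hν ▸ Measure.isProbabilityMeasure_map hT.aemeasurable
  have : IsProbabilityMeasure (hazardLaw (fun _ => 1) id) :=
    hν₀ ▸ Measure.isProbabilityMeasure_map hT₀.aemeasurable
  have hid (t : ℝ) : id t = ∫ _ in (0:ℝ)..t, (1 : ℝ) := by simp
  have hratio : EqOn (fun t => 1 * exp (-id t) * φ t)
      (fun t => exp (Lam v₀ - v₀) * (lam t * exp (-Lam t) * f t)) (Ioc v₀ C) := by
    intro t ht
    simp only [hφ_def, min_eq_left ht.2, if_pos ht.2, id, exp_sub, exp_neg]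
    field_simp
  have hf_int := integrableOn_Ioc_hazardDensity_mul hlam_cont hLam hf_meas (fun _ => hM _ _) v₀ C
  have hLHS := integral_cond_hazardLaw_Ioi hlam_cont hLam hlam_nonneg hv₀ hv₀C.le hf_int
    (K := g C false) fun t (ht : C < t) => by simp [hf_def, min_eq_right ht.le, ht.not_ge]
  have hRHS := integral_cond_hazardLaw_Ioi continuous_const hid (fun _ => zero_le_one) hv₀ hv₀C.le
    (IntegrableOn.congr_fun (hf_int.const_mul _) hratio.symm measurableSet_Ioc)
    (f := φ) (K := g C false * 1 * exp (-(Lam C - Lam v₀)) * exp (C - v₀))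
    fun t (ht : C < t) => by simp [hφ_def, hf_def, min_eq_right ht.le, ht.not_ge]
  rw [← hν, ← integral_cond_preimage μ hT measurableSet_Ioi hf_meas.aestronglyMeasurable] at hLHS
  rw [← hν₀, ← integral_cond_preimage μ₀ hT₀ measurableSet_Ioi hφ_meas.aestronglyMeasurable,
    setIntegral_congr_fun measurableSet_Ioc hratio,
    integral_const_mul] at hRHS
  refine hLHS.trans (Eq.trans ?_ hRHS.symm)
  simp only [id, exp_sub, exp_neg]
  field_simp

/-- Left-truncated censored likelihood ratio: conditionally on `{T > v₀}`, the law of the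
censored data `(T̃, δ)` for `T` with hazard `λ` is obtained from the unit-rate exponential
reference by the likelihood `λ(T̃₀)^δ₀ exp(-(Λ(T̃₀) - Λ(v₀))) e^(T̃₀ - v₀)`. -/
theorem censored_likelihood_ratio_truncated
    {Ω : Type*} [MeasurableSpace Ω] {μ : Measure Ω} [IsProbabilityMeasure μ]
    {Ω₀ : Type*} [MeasurableSpace Ω₀] {μ₀ : Measure Ω₀} [IsProbabilityMeasure μ₀]
    (lam : ℝ → ℝ) (hlam_nonneg : ∀ u, 0 ≤ lam u) (hlam_cont : Continuous lam)
    (Lam : ℝ → ℝ) (hLam : ∀ t, Lam t = ∫ u in (0:ℝ)..t, lam u)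
    (T : Ω → ℝ) (hT : Measurable T)
    (hlawT : Measure.map T μ =
      (volume.restrict (Set.Ioi (0:ℝ))).withDensity
        (fun s => ENNReal.ofReal (lam s * Real.exp (-(Lam s)))))
    (T₀ : Ω₀ → ℝ) (hT₀ : Measurable T₀)
    (hlawT₀ : Measure.map T₀ μ₀ = expMeasure 1)
    (v₀ C : ℝ) (hv₀ : 0 ≤ v₀) (hv₀C : v₀ < C)
    (hpos : 0 < μ {ω | v₀ < T ω})
    (g : ℝ → Bool → ℝ) (hg : ∀ b, Measurable (fun x => g x b))
    (hbdd : ∃ M, ∀ x b, |g x b| ≤ M) :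
    ∫ ω, g (min (T ω) C) (decide (T ω ≤ C))
        ∂(ProbabilityTheory.cond μ {ω | v₀ < T ω}) =
      ∫ ω, g (min (T₀ ω) C) (decide (T₀ ω ≤ C)) *
        (if T₀ ω ≤ C then lam (min (T₀ ω) C) else 1) *
        Real.exp (-(Lam (min (T₀ ω) C) - Lam v₀)) *
        Real.exp (min (T₀ ω) C - v₀)
        ∂(ProbabilityTheory.cond μ₀ {ω | v₀ < T₀ ω}) :=
  censored_likelihood_ratio_truncated_general lam hlam_nonneg hlam_cont Lam hLam T hT hlawT T₀ hT₀
    hlawT₀ v₀ C hv₀ hv₀C g hg hbdd
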